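/- Let $(M, \mu)$ be a measure space with $0 < \mu(M) < \infty$, let $m \geq 1$, let $(e_j)_{j \in J}$ be an orthonormal family in $L^2(M, \mu)$ with a joint eigenvalue map $\lambda : J \to \mathbb{R}^m$ such that each level set $\{j : \lambda_j = s\}$ is finite, and suppose that for every $s \in \mathbb{R}^m$ in the range of $\lambda$, the function $x \mapsto \sum_{j : \lambda_j = s} |e_j(x)|^2$ is constant $\mu$-almost everywhere. Let $S$ be a finite subset of the range of $\lambda$, let $X_S = \{j : \lambda_j \in S\}$, and let $E \subset M$ be measurable. Suppose $f \in L^2(M,\mu)$ is not almost everywhere zero and satisfies $\|f - 1_E f\|_{L^2} \leq \epsilon \|f\|_{L^2}$ and $\|f - \sum_{j \in X_S} \langle f, e_j\rangle e_j\|_{L^2} \leq \epsilon' \|f\|_{L^2}$, with $0 \leq \epsilon, \epsilon' < 1$ and $\epsilon + \epsilon' < 1$. Then $\# X_S \cdot \frac{\mu(E)}{\mu(M)} \geq (1 - \epsilon - \epsilon')^2$. -/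

import Mathlib

/-!
Let `P = ∑_{j ∈ X_S} ⟨f, e_j⟩ e_j`. The two concentration hypotheses and the triangle inequality
give `‖1_E P‖ ≥ (1 - ε - ε') ‖f‖`. Pointwise Cauchy–Schwarz bounds `|P|²` by
`(∑ |⟨f, e_j⟩|²) · K` with `K = ∑_{j ∈ X_S} |e_j|²`; since `X_S` is a union of level sets of `λ`,
`K` is a.e. a constant `c`, and integrating gives `c μ(M) = #X_S`. With Bessel's inequality this
yields `‖1_E P‖² ≤ ‖f‖² · #X_S μ(E) / μ(M)`.
-/

open MeasureTheory Finset ComplexConjugate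

section

variable {M : Type*} [MeasurableSpace M] {μ : Measure M}

lemma norm_sum_mul_sq_le {ι R : Type*} [NonUnitalSeminormedRing R] (s : Finset ι) (a b : ι → R) :
    ‖∑ i ∈ s, a i * b i‖ ^ 2 ≤ (∑ i ∈ s, ‖a i‖ ^ 2) * ∑ i ∈ s, ‖b i‖ ^ 2 :=
  calc ‖∑ i ∈ s, a i * b i‖ ^ 2 ≤ (∑ i ∈ s, ‖a i‖ * ‖b i‖) ^ 2 := by
        gcongr
        exact (norm_sum_le _ _).trans (sum_le_sum fun i _ => norm_mul_le _ _)
    _ ≤ _ := sum_mul_sq_le_sq_mul_sq s _ _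

lemma exists_ae_sum_biUnion_eq_const {ι κ β : Type*} [DecidableEq ι] [AddCommMonoid β]
    {S : Finset κ} {T : κ → Finset ι} (hT : (S : Set κ).PairwiseDisjoint T) {g : ι → M → β}
    (h : ∀ s ∈ S, ∃ c : β, ∀ᵐ x ∂μ, ∑ j ∈ T s, g j x = c) :
    ∃ c : β, ∀ᵐ x ∂μ, ∑ j ∈ S.biUnion T, g j x = c := by
  choose! c hc using h
  refine ⟨∑ s ∈ S, c s, ?_⟩
  filter_upwards [(Filter.eventually_all_finset S).2 hc] with x hx
  rw [sum_biUnion hT]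
  exact sum_congr rfl hx

lemma MeasureTheory.MemLp.toReal_eLpNorm_two_sq {F : Type*} [NormedAddCommGroup F] {g : M → F}
    (hg : MemLp g 2 μ) : (eLpNorm g 2 μ).toReal ^ 2 = ∫ x, ‖g x‖ ^ 2 ∂μ := by
  rw [hg.eLpNorm_eq_integral_rpow_norm two_ne_zero ENNReal.ofNat_ne_top,
    ENNReal.toReal_ofReal (by positivity), ← Real.rpow_natCast, ← Real.rpow_mul
      (integral_nonneg fun x => by positivity)]
  norm_num

lemma integral_mul_conj (u : M → ℂ) :
    ∫ x, u x * conj (u x) ∂μ = ((∫ x, ‖u x‖ ^ 2 ∂μ : ℝ) : ℂ) := by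
  simp_rw [Complex.mul_conj']
  exact_mod_cast integral_complex_ofReal

lemma MeasureTheory.MemLp.inner_toLp {u v : M → ℂ} (hu : MemLp u 2 μ) (hv : MemLp v 2 μ) :
    inner ℂ (hu.toLp u) (hv.toLp v) = ∫ x, v x * conj (u x) ∂μ := by
  rw [L2.inner_def]
  refine integral_congr_ae ?_
  filter_upwards [hu.coeFn_toLp, hv.coeFn_toLp] with x hu hv
  rw [hu, hv, RCLike.inner_apply]

lemma eLpNorm_le_add_eLpNorm_indicator {F : Type*} [NormedAddCommGroup F] {p : ENNReal}
    (hp : 1 ≤ p) {f P : M → F} {E : Set M} (hE : MeasurableSet E)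
    (hf : AEStronglyMeasurable f μ) (hP : AEStronglyMeasurable P μ) :
    eLpNorm f p μ ≤
      eLpNorm (f - E.indicator f) p μ + eLpNorm (f - P) p μ + eLpNorm (E.indicator P) p μ := by
  have hsplit : f = (f - E.indicator f) + E.indicator (f - P) + E.indicator P := by
    rw [Set.indicator_sub']; abel
  calc eLpNorm f p μ
      = eLpNorm ((f - E.indicator f) + E.indicator (f - P) + E.indicator P) p μ := by
        rw [← hsplit]
    _ ≤ eLpNorm (f - E.indicator f) p μ + eLpNorm (E.indicator (f - P)) p μ
          + eLpNorm (E.indicator P) p μ := by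
        refine (eLpNorm_add_le ?_ (hP.indicator hE) hp).trans ?_
        · exact (hf.sub (hf.indicator hE)).add ((hf.sub hP).indicator hE)
        gcongr
        exact eLpNorm_add_le (hf.sub (hf.indicator hE)) ((hf.sub hP).indicator hE) hp
    _ ≤ _ := by gcongr; exact eLpNorm_indicator_le _

lemma one_sub_sub_mul_toReal_eLpNorm_le {F : Type*} [NormedAddCommGroup F] {p : ENNReal}
    (hp : 1 ≤ p) {f P : M → F} {E : Set M} (hE : MeasurableSet E) (hf : MemLp f p μ)
    (hP : MemLp P p μ) {ε ε' : ℝ} (hε : 0 ≤ ε) (hε' : 0 ≤ ε')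
    (hconc : eLpNorm (f - E.indicator f) p μ ≤ ENNReal.ofReal ε * eLpNorm f p μ)
    (hspec : eLpNorm (f - P) p μ ≤ ENNReal.ofReal ε' * eLpNorm f p μ) :
    (1 - ε - ε') * (eLpNorm f p μ).toReal ≤ (eLpNorm (E.indicator P) p μ).toReal := by
  have h := (eLpNorm_le_add_eLpNorm_indicator hp hE hf.1 hP.1).trans
    (add_le_add_left (add_le_add hconc hspec) _)
  rw [← ENNReal.ofReal_toReal hf.eLpNorm_ne_top,
    ← ENNReal.ofReal_toReal (hP.indicator hE).eLpNorm_ne_top, ← ENNReal.ofReal_mul hε,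
    ← ENNReal.ofReal_mul hε', ← ENNReal.ofReal_add (by positivity) (by positivity),
    ← ENNReal.ofReal_add (by positivity) ENNReal.toReal_nonneg,
    ENNReal.ofReal_le_ofReal_iff (by positivity)] at h
  linarith

section OrthonormalFamily

variable {J : Type*} {e : J → M → ℂ}

lemma orthonormal_toLp [DecidableEq J] (he2 : ∀ j, MemLp (e j) 2 μ)
    (horth : ∀ i j, ∫ x, e i x * conj (e j x) ∂μ = if i = j then 1 else 0) :
    Orthonormal ℂ fun j => (he2 j).toLp (e j) := by
  rw [orthonormal_iff_ite]
  intro i j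
  rw [MemLp.inner_toLp, horth j i]
  exact if_congr eq_comm rfl rfl

lemma sum_norm_sq_integral_mul_conj_le [DecidableEq J] (he2 : ∀ j, MemLp (e j) 2 μ)
    (horth : ∀ i j, ∫ x, e i x * conj (e j x) ∂μ = if i = j then 1 else 0)
    (X : Finset J) {f : M → ℂ} (hf : MemLp f 2 μ) :
    ∑ j ∈ X, ‖∫ x, f x * conj (e j x) ∂μ‖ ^ 2 ≤ (eLpNorm f 2 μ).toReal ^ 2 := by
  simpa only [MemLp.inner_toLp, Lp.norm_toLp] using
    (orthonormal_toLp he2 horth).sum_inner_products_le (s := X) (hf.toLp f)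

lemma integral_sum_norm_sq_eq_card [DecidableEq J] (he2 : ∀ j, MemLp (e j) 2 μ)
    (horth : ∀ i j, ∫ x, e i x * conj (e j x) ∂μ = if i = j then 1 else 0) (X : Finset J) :
    ∫ x, ∑ j ∈ X, ‖e j x‖ ^ 2 ∂μ = X.card := by
  have hone : ∀ j, ∫ x, ‖e j x‖ ^ 2 ∂μ = 1 := fun j => by
    exact_mod_cast (integral_mul_conj (e j)).symm.trans ((horth j j).trans (if_pos rfl))
  rw [integral_finsetSum _ fun j _ => (he2 j).integrable_norm_pow two_ne_zero]
  simp [hone]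

lemma toReal_eLpNorm_indicator_sum_sq_le (he2 : ∀ j, MemLp (e j) 2 μ) (a : J → ℂ)
    {X : Finset J} {c : ℝ} (hK : ∀ᵐ x ∂μ, ∑ j ∈ X, ‖e j x‖ ^ 2 = c) {E : Set M}
    (hE : MeasurableSet E) :
    (eLpNorm (E.indicator fun x => ∑ j ∈ X, a j * e j x) 2 μ).toReal ^ 2 ≤
      (∑ j ∈ X, ‖a j‖ ^ 2) * (c * μ.real E) := by
  have hP : MemLp (fun x => ∑ j ∈ X, a j * e j x) 2 μ :=
    memLp_finsetSum X fun j _ => (he2 j).const_mul (a j)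
  have hKint : Integrable (fun x => ∑ j ∈ X, ‖e j x‖ ^ 2) μ :=
    integrable_finsetSum X fun j _ => (he2 j).integrable_norm_pow two_ne_zero
  rw [(hP.indicator hE).toReal_eLpNorm_two_sq]
  calc ∫ x, ‖E.indicator (fun x => ∑ j ∈ X, a j * e j x) x‖ ^ 2 ∂μ
      = ∫ x in E, ‖∑ j ∈ X, a j * e j x‖ ^ 2 ∂μ := by
        rw [← integral_indicator hE]
        congr with x
        by_cases hx : x ∈ E <;> simp [hx]
    _ ≤ ∫ x in E, (∑ j ∈ X, ‖a j‖ ^ 2) * ∑ j ∈ X, ‖e j x‖ ^ 2 ∂μ :=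
        integral_mono_of_nonneg (ae_of_all _ fun x => by positivity)
          (hKint.const_mul _).restrict (ae_of_all _ fun x => norm_sum_mul_sq_le X a _)
    _ = (∑ j ∈ X, ‖a j‖ ^ 2) * (c * μ.real E) := by
        rw [integral_const_mul, integral_congr_ae (ae_restrict_of_ae hK), setIntegral_const,
          smul_eq_mul, mul_comm c]

end OrthonormalFamily

end

theorem statement14_general {M J : Type*} [MeasurableSpace M] [DecidableEq J] (μ : Measure M)
    (hM0 : 0 < μ Set.univ) (hMfin : μ Set.univ < ⊤)
    (m : ℕ)
    (e : J → M → ℂ) (lam : J → (Fin m → ℝ))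
    (he2 : ∀ j, MemLp (e j) 2 μ)
    (horth : ∀ i j, ∫ x, e i x * (starRingEnd ℂ) (e j x) ∂μ = if i = j then 1 else 0)
    (T : (Fin m → ℝ) → Finset J) (hT : ∀ s j, j ∈ T s ↔ lam j = s)
    (hhom : ∀ s ∈ Set.range lam, ∃ c : ℝ, ∀ᵐ x ∂μ, ∑ j ∈ T s, ‖e j x‖ ^ 2 = c)
    (S : Finset (Fin m → ℝ)) (hS : ↑S ⊆ Set.range lam)
    (XS : Finset J) (hXS : ∀ j, j ∈ XS ↔ lam j ∈ S)
    (E : Set M) (hE : MeasurableSet E)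
    (f : M → ℂ) (hf : MemLp f 2 μ) (hf0 : ¬ (f =ᵐ[μ] 0))
    (ε ε' : ℝ) (hε0 : 0 ≤ ε) (hε'0 : 0 ≤ ε')
    (hsum : ε + ε' < 1)
    (hconc : eLpNorm (f - E.indicator f) 2 μ ≤ ENNReal.ofReal ε * eLpNorm f 2 μ)
    (hspec : eLpNorm
        (f - fun x => ∑ j ∈ XS, (∫ y, f y * (starRingEnd ℂ) (e j y) ∂μ) * e j x) 2 μ
      ≤ ENNReal.ofReal ε' * eLpNorm f 2 μ) :
    (1 - ε - ε') ^ 2 ≤ (XS.card : ℝ) * ((μ E).toReal / (μ Set.univ).toReal) := by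
  set a : J → ℂ := fun j => ∫ y, f y * conj (e j y) ∂μ
  set N := (eLpNorm f 2 μ).toReal
  have hN : 0 < N := ENNReal.toReal_pos
    (by rwa [Ne, eLpNorm_eq_zero_iff hf.1 two_ne_zero]) hf.eLpNorm_ne_top
  have hXS_eq : XS = S.biUnion T := by ext j; simp [hXS, hT]
  obtain ⟨c, hK⟩ : ∃ c : ℝ, ∀ᵐ x ∂μ, ∑ j ∈ XS, ‖e j x‖ ^ 2 = c := by
    refine hXS_eq ▸ exists_ae_sum_biUnion_eq_const ?_ fun s hs => hhom s (hS hs)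
    intro s _ t _ hst
    exact Finset.disjoint_left.2 fun j hjs hjt =>
      hst (((hT s j).1 hjs).symm.trans ((hT t j).1 hjt))
  have hμM : 0 < μ.real Set.univ := ENNReal.toReal_pos hM0.ne' hMfin.ne
  have hc : c = XS.card / μ.real Set.univ := by
    rw [eq_div_iff hμM.ne', ← integral_sum_norm_sq_eq_card he2 horth,
      integral_congr_ae hK, integral_const, smul_eq_mul, mul_comm]
  have hlow := one_sub_sub_mul_toReal_eLpNorm_le one_le_two hE hf
    (memLp_finsetSum XS fun j _ => (he2 j).const_mul (a j)) hε0 hε'0 hconc hspec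
  have hup := toReal_eLpNorm_indicator_sum_sq_le he2 a hK hE
  have hBessel := sum_norm_sq_integral_mul_conj_le he2 horth XS hf
  have hcE : 0 ≤ c * μ.real E := by rw [hc]; positivity
  have hsq : (1 - ε - ε') ^ 2 * N ^ 2 ≤ c * μ.real E * N ^ 2 :=
    calc (1 - ε - ε') ^ 2 * N ^ 2 = ((1 - ε - ε') * N) ^ 2 := by ring
      _ ≤ _ := pow_le_pow_left₀ (by nlinarith) hlow 2
      _ ≤ _ := hup
      _ ≤ N ^ 2 * (c * μ.real E) := mul_le_mul_of_nonneg_right hBessel hcE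
      _ = c * μ.real E * N ^ 2 := mul_comm _ _
  calc (1 - ε - ε') ^ 2 ≤ c * μ.real E := le_of_mul_le_mul_right hsq (by positivity)
    _ = _ := by rw [hc, measureReal_def, measureReal_def]; ring

/-- Joint-spectrum uncertainty principle: let `(e_j)` be an orthonormal family with joint
eigenvalue map `λ : J → ℝ^m` whose level sets `T s = {j : λ_j = s}` are finite, such that
`∑_{λ_j = s} |e_j(x)|²` is a.e. constant for every `s` in the range of `λ`. If a nonzero
`f ∈ L²` is `L²`-concentrated on `E` and spectrally concentrated on
`X_S = {j : λ_j ∈ S}`, then `#X_S ⬝ μ(E)/μ(M) ≥ (1-ε-ε')²`. -/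
theorem statement14 {M J : Type*} [MeasurableSpace M] [DecidableEq J] (μ : Measure M)
    (hM0 : 0 < μ Set.univ) (hMfin : μ Set.univ < ⊤)
    (m : ℕ) (hm : 1 ≤ m)
    (e : J → M → ℂ) (lam : J → (Fin m → ℝ))
    (he2 : ∀ j, MemLp (e j) 2 μ)
    (horth : ∀ i j, ∫ x, e i x * (starRingEnd ℂ) (e j x) ∂μ = if i = j then 1 else 0)
    (T : (Fin m → ℝ) → Finset J) (hT : ∀ s j, j ∈ T s ↔ lam j = s)
    (hhom : ∀ s ∈ Set.range lam, ∃ c : ℝ, ∀ᵐ x ∂μ, ∑ j ∈ T s, ‖e j x‖ ^ 2 = c)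
    (S : Finset (Fin m → ℝ)) (hS : ↑S ⊆ Set.range lam)
    (XS : Finset J) (hXS : ∀ j, j ∈ XS ↔ lam j ∈ S)
    (E : Set M) (hE : MeasurableSet E)
    (f : M → ℂ) (hf : MemLp f 2 μ) (hf0 : ¬ (f =ᵐ[μ] 0))
    (ε ε' : ℝ) (hε0 : 0 ≤ ε) (hε1 : ε < 1) (hε'0 : 0 ≤ ε') (hε'1 : ε' < 1)
    (hsum : ε + ε' < 1)
    (hconc : eLpNorm (f - E.indicator f) 2 μ ≤ ENNReal.ofReal ε * eLpNorm f 2 μ)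
    (hspec : eLpNorm
        (f - fun x => ∑ j ∈ XS, (∫ y, f y * (starRingEnd ℂ) (e j y) ∂μ) * e j x) 2 μ
      ≤ ENNReal.ofReal ε' * eLpNorm f 2 μ) :
    (1 - ε - ε') ^ 2 ≤ (XS.card : ℝ) * ((μ E).toReal / (μ Set.univ).toReal) :=
  statement14_general μ hM0 hMfin m e lam he2 horth T hT hhom S hS XS hXS E hE f hf hf0 ε ε' hε0
    hε'0 hsum hconc hspec
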